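/- Let A be a model of S_k with k ≥ 1, let a be a nonempty finite tuple of elements of A, and let n, r ∈ ℕ. Then there exist elements v_0, …, v_{r−1} ∈ A such that each v_i is not in the full transitive closure tcl(a), and v_i ∉ tcl_n(v_j) whenever i ≠ j. -/
import Mathlib


/-- Levels of the transitive closure of a tuple. -/
def tcl {A : Type*} (r : A → A → Prop) {l : ℕ} (a : Fin l → A) : ℕ → Set A
  | 0 => Set.range a
  | n + 1 => tcl r a n ∪ {v | ∃ u ∈ tcl r a n, r v u}

/-- `r` makes `A` a model of the theory `S_k`. -/
def IsSkModel {A : Type*} (r : A → A → Prop) (k : ℕ) : Prop :=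
  (∀ x y : A, (∀ t, r t x ↔ r t y) → x = y) ∧
  (∀ x : A, {t | r t x}.Finite ∧ {t | r t x}.ncard ≤ k) ∧
  (∀ s : Set A, s.Finite → s.ncard ≤ k → ∃ y : A, ∀ t, r t y ↔ t ∈ s) ∧
  (∀ x : A, ¬ Relation.TransGen r x x)

/-- Maximal element of a finite nonempty set w.r.t. the transitive closure of an
acyclic relation. -/
lemma exists_max_of_acyclic {A : Type*} (mem : A → A → Prop)
    (hacyc : ∀ x : A, ¬ Relation.TransGen mem x x)
    (s : Finset A) (hs : s.Nonempty) :
    ∃ x ∈ s, ∀ y ∈ s, ¬ Relation.TransGen mem x y := by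
  classical
  induction s using Finset.induction_on with
  | empty => exact absurd hs (by simp)
  | @insert x t hx ih =>
    rcases t.eq_empty_or_nonempty with rfl | ht
    · refine ⟨x, by simp, ?_⟩
      intro y hy
      simp only [Finset.mem_insert, Finset.notMem_empty, or_false] at hy
      subst hy; exact hacyc _
    · obtain ⟨m, hm, hmax⟩ := ih ht
      by_cases hmx : Relation.TransGen mem m x
      · refine ⟨x, Finset.mem_insert_self _ _, ?_⟩
        intro y hy hxy
        rcases Finset.mem_insert.1 hy with rfl | hy
        · exact hacyc y hxy
        · exact hmax y hy (hmx.trans hxy)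
      · refine ⟨m, Finset.mem_insert_of_mem hm, ?_⟩
        intro y hy
        rcases Finset.mem_insert.1 hy with rfl | hy
        · exact hmx
        · exact hmax y hy

/-- In a model of `S_k` with `k ≥ 1`, for any nonempty tuple `a` and any `n, r ∈ ℕ`
there are elements `v_0, …, v_{r-1}` avoiding the full transitive closure `tcl(a)`
and with `v_i ∉ tcl_n(v_j)` for `i ≠ j`. -/
theorem exists_generic_points {A : Type*} (mem : A → A → Prop) (k : ℕ) (hk : 1 ≤ k)
    (hA : IsSkModel mem k) {l : ℕ} (hl : 0 < l) (a : Fin l → A) (n r : ℕ) :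
    ∃ v : Fin r → A,
      (∀ i, v i ∉ ⋃ m, tcl mem a m) ∧
      (∀ i j, i ≠ j → v i ∉ tcl mem (fun _ : Fin 1 => v j) n) := by
  classical
  obtain ⟨hext, hsmall, hcomp, hacyc⟩ := hA
  -- singleton operation
  have hsing : ∀ x : A, ∃ y, ∀ t, mem t y ↔ t = x := by
    intro x
    obtain ⟨y, hy⟩ := hcomp {x} (Set.finite_singleton x) (by simpa using hk)
    exact ⟨y, by simpa using hy⟩
  set s : A → A := fun x => (hsing x).choose with hs_def
  have hs : ∀ x t, mem t (s x) ↔ t = x := fun x => (hsing x).choose_spec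
  have hstep : ∀ y : A, mem y (s y) := fun y => (hs y y).mpr rfl
  have hmemS : ∀ (x : A) (e : ℕ) (t : A), mem t (s^[e + 1] x) ↔ t = s^[e] x := by
    intro x e t
    rw [Function.iterate_succ_apply']
    exact hs _ t
  -- x is strictly below its iterated singletons
  have htrans : ∀ (x : A) (e : ℕ), 0 < e → Relation.TransGen mem x (s^[e] x) := by
    intro x e he
    induction e with
    | zero => omega
    | succ e ih =>
      rcases Nat.eq_zero_or_pos e with rfl | he'
      · exact Relation.TransGen.single (by simpa using hstep x)
      · exact (ih he').tail ((hmemS x e _).mpr rfl)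
  have htrans' : ∀ (x : A) (p q : ℕ), p < q → Relation.TransGen mem (s^[p] x) (s^[q] x) := by
    intro x p q hpq
    have : s^[q] x = s^[q - p] (s^[p] x) := by
      rw [← Function.iterate_add_apply]
      congr 1
      omega
    rw [this]
    exact htrans _ _ (by omega)
  have hinj : ∀ (x : A) (p q : ℕ), s^[p] x = s^[q] x → p = q := by
    intro x p q h
    by_contra hne
    rcases Nat.lt_or_ge p q with hlt | hge
    · have := htrans' x p q hlt
      rw [h] at this
      exact hacyc _ this
    · have hlt : q < p := by omega
      have := htrans' x q p hlt
      rw [← h] at this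
      exact hacyc _ this
  -- structure of tcl of a single iterated singleton
  have key1 : ∀ (x : A) (e m : ℕ) (u : A), u ∈ tcl mem (fun _ : Fin 1 => s^[e] x) m →
      (∃ t, t ≤ m ∧ t ≤ e ∧ u = s^[e - t] x) ∨ Relation.TransGen mem u x := by
    intro x e m
    induction m with
    | zero =>
      intro u hu
      obtain ⟨_, rfl⟩ := hu
      exact Or.inl ⟨0, le_rfl, Nat.zero_le _, by simp⟩
    | succ m ih =>
      intro u hu
      rcases hu with hu | ⟨w, hw, huw⟩
      · rcases ih u hu with ⟨t, ht1, ht2, ht3⟩ | h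
        · exact Or.inl ⟨t, by omega, ht2, ht3⟩
        · exact Or.inr h
      · rcases ih w hw with ⟨t, ht1, ht2, rfl⟩ | h
        · rcases Nat.eq_zero_or_pos (e - t) with hz | hpos
          · rw [hz] at huw
            exact Or.inr (Relation.TransGen.single (by simpa using huw))
          · have : e - t = (e - t - 1) + 1 := by omega
            rw [this, hmemS] at huw
            refine Or.inl ⟨t + 1, by omega, by omega, ?_⟩
            rw [huw]
            congr 1
        · exact Or.inr (Relation.TransGen.head huw h)
  -- structure of tcl of a
  have key2 : ∀ (m : ℕ) (u : A), u ∈ tcl mem a m →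
      u ∈ Set.range a ∨ ∃ j, Relation.TransGen mem u (a j) := by
    intro m
    induction m with
    | zero => intro u hu; exact Or.inl hu
    | succ m ih =>
      intro u hu
      rcases hu with hu | ⟨w, hw, huw⟩
      · exact ih u hu
      · rcases ih w hw with ⟨j, rfl⟩ | ⟨j, h⟩
        · exact Or.inr ⟨j, Relation.TransGen.single huw⟩
        · exact Or.inr ⟨j, Relation.TransGen.head huw h⟩
  -- a maximal entry of a
  have hfin : (Set.range a).Finite := Set.finite_range a
  obtain ⟨x, hxmem, hxmax⟩ := exists_max_of_acyclic mem hacyc hfin.toFinset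
    (hfin.toFinset_nonempty.mpr (Set.range_nonempty_iff_nonempty.2 ⟨⟨0, hl⟩⟩))
  have hxmax' : ∀ y ∈ Set.range a, ¬ Relation.TransGen mem x y := by
    intro y hy
    exact hxmax y (hfin.mem_toFinset.mpr hy)
  -- the generic points
  refine ⟨fun i => s^[1 + (n + 1) * i.val] x, ?_, ?_⟩
  · intro i hi
    obtain ⟨_, ⟨m, rfl⟩, hm⟩ := hi
    have hx : Relation.TransGen mem x (s^[1 + (n + 1) * i.val] x) :=
      htrans x _ (by omega)
    rcases key2 m _ hm with ⟨j, hj⟩ | ⟨j, hj⟩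
    · exact hxmax' (a j) ⟨j, rfl⟩ (hj ▸ hx)
    · exact hxmax' (a j) ⟨j, rfl⟩ (hx.trans hj)
  · intro i j hij h
    rcases key1 x _ n _ h with ⟨t, ht1, ht2, ht3⟩ | h
    · have heq := hinj x _ _ ht3
      have hij' : i.val ≠ j.val := fun hh => hij (Fin.ext hh)
      rcases Nat.lt_or_ge i.val j.val with hlt | hge
      · have hmul : (n + 1) * i.val + (n + 1) ≤ (n + 1) * j.val := by
          calc (n + 1) * i.val + (n + 1) = (n + 1) * (i.val + 1) := by ring
          _ ≤ (n + 1) * j.val := Nat.mul_le_mul_left _ (by omega)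
        omega
      · have hlt : j.val < i.val := by omega
        have hmul : (n + 1) * j.val + (n + 1) ≤ (n + 1) * i.val := by
          calc (n + 1) * j.val + (n + 1) = (n + 1) * (j.val + 1) := by ring
          _ ≤ (n + 1) * i.val := Nat.mul_le_mul_left _ (by omega)
        omega
    · have hx1 : Relation.TransGen mem x (s^[1 + (n + 1) * i.val] x) :=
        htrans x _ (by omega)
      exact hacyc x (hx1.trans h)
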